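/- (Intertwining property of the Berezin–Weil–Zak transform.) Let λ ∈ ℤ∖{0}, q ∈ ℤ, let h : ℝ → ℂ be a Schwartz function and let g = (a′,b′,c′) ∈ ℝ³. Then the function u ↦ e^{2πiλ(c′+ub′)} h(u+a′) is Schwartz, and for every x = (a,b,c) ∈ ℝ³ one has BWZ_{λ,q}(u ↦ e^{2πiλ(c′+ub′)} h(u+a′))(x) = BWZ_{λ,q}(h)(x·g), where · denotes the Heisenberg product. -/
import Mathlib

open MeasureTheory Real Complex
open scoped ComplexConjugate

theorem iter_cexp (c : ℂ) (n : ℕ) :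
    iteratedDeriv n (fun x : ℝ => Complex.exp (c * x)) =
      fun x : ℝ => c ^ n * Complex.exp (c * x) := by
  induction n with
  | zero => simp
  | succ n ih =>
    rw [iteratedDeriv_succ, ih]
    funext x
    have hd : HasDerivAt (fun x : ℝ => Complex.exp (c * x)) (Complex.exp (c * x) * (c * 1)) x :=
      ((Complex.ofRealCLM.hasDerivAt (x := x)).const_mul c).cexp
    rw [deriv_const_mul _ (by simpa using hd.differentiableAt), hd.deriv]
    ring

theorem tg_cexp (c : ℂ) (hc : c.re = 0) :
    Function.HasTemperateGrowth (fun x : ℝ => Complex.exp (c * x)) := by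
  constructor
  · exact (contDiff_const.mul Complex.ofRealCLM.contDiff).cexp
  · intro n
    refine ⟨0, ‖c‖ ^ n, fun x => ?_⟩
    rw [norm_iteratedFDeriv_eq_norm_iteratedDeriv, iter_cexp]
    have : ((c * x).re) = 0 := by simp [hc]
    simp [norm_mul, Complex.norm_exp, this]

theorem tg_addRight (a' : ℝ) : Function.HasTemperateGrowth (fun u : ℝ => u + a') := by
  apply Function.HasTemperateGrowth.of_fderiv (k := 1) (C := 1 + |a'|)
  · have : fderiv ℝ (fun u : ℝ => u + a') = fun _ : ℝ => ContinuousLinearMap.id ℝ ℝ := by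
      funext x
      rw [fderiv_add_const]
      simp
    rw [this]
    exact .const _
  · exact (differentiable_id.add_const a')
  · intro x
    simp only [Real.norm_eq_abs, pow_one]
    have := abs_add_le x a'
    nlinarith [abs_nonneg x, abs_nonneg a']

theorem al_addRight (a' : ℝ) : AntilipschitzWith 1 (fun u : ℝ => u + a') :=
  (Isometry.of_dist_eq (fun x y => by simp [Real.dist_eq])).antilipschitz

/-- The Heisenberg product on `ℝ³`: `(a,b,c)·(a',b',c') = (a+a', b+b', c+c'+ab')`. -/
def heisMul (x y : ℝ × ℝ × ℝ) : ℝ × ℝ × ℝ :=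
  (x.1 + y.1, x.2.1 + y.2.1, x.2.2 + y.2.2 + x.1 * y.2.1)

/-- The generalised Berezin–Weil–Zak transform
`BWZ_{λ,q}(h)(a,b,c) = (√|λ|/λ) ∑_{k∈ℤ} e^{-2πiqk/λ} e^{2πi(λc+kb)} h(k/λ + a)`. -/
noncomputable def BWZ (lam q : ℤ) (h : ℝ → ℂ) (x : ℝ × ℝ × ℝ) : ℂ :=
  ((Real.sqrt |(lam : ℝ)| : ℝ) / (lam : ℝ) : ℝ) *
    ∑' k : ℤ, Complex.exp (-(2 * (π : ℂ) * Complex.I * (q : ℂ) * (k : ℂ)) / (lam : ℂ)) *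
      Complex.exp (2 * (π : ℂ) * Complex.I * ((lam : ℂ) * (x.2.2 : ℂ) + (k : ℂ) * (x.2.1 : ℂ))) *
      h ((k : ℝ) / (lam : ℝ) + x.1)

/-- **Intertwining property of the Berezin–Weil–Zak transform**:
`π_λ(g)h` is Schwartz and `BWZ_{λ,q}(π_λ(g)h)(x) = BWZ_{λ,q}(h)(x·g)`. -/
theorem BWZ_intertwines (lam : ℤ) (hlam : lam ≠ 0) (q : ℤ) (h : SchwartzMap ℝ ℂ)
    (a' b' c' : ℝ) :
    (∃ h' : SchwartzMap ℝ ℂ, ⇑h' = fun u : ℝ =>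
        Complex.exp (2 * (π : ℂ) * Complex.I * (lam : ℂ) * ((c' : ℂ) + (u : ℂ) * (b' : ℂ))) *
          h (u + a')) ∧
      ∀ a b c : ℝ,
        BWZ lam q (fun u : ℝ =>
            Complex.exp (2 * (π : ℂ) * Complex.I * (lam : ℂ) * ((c' : ℂ) + (u : ℂ) * (b' : ℂ))) *
              h (u + a')) (a, b, c)
          = BWZ lam q (⇑h) (heisMul (a, b, c) (a', b', c')) := by
  constructor
  · set A : ℂ := 2 * (π : ℂ) * Complex.I * (lam : ℂ) * (c' : ℂ) with hA
    set B : ℂ := 2 * (π : ℂ) * Complex.I * (lam : ℂ) * (b' : ℂ) with hB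
    have hBre : B.re = 0 := by simp [hB]
    refine ⟨Complex.exp A •
      (SchwartzMap.bilinLeftCLM (ContinuousLinearMap.mul ℝ ℂ) (tg_cexp B hBre)
        (SchwartzMap.compCLMOfAntilipschitz ℝ (tg_addRight a') (al_addRight a') h)), ?_⟩
    funext u
    have happ : (SchwartzMap.bilinLeftCLM (ContinuousLinearMap.mul ℝ ℂ) (tg_cexp B hBre)
        (SchwartzMap.compCLMOfAntilipschitz ℝ (tg_addRight a') (al_addRight a') h)) u
        = h (u + a') * Complex.exp (B * u) := rfl
    rw [SchwartzMap.smul_apply, happ]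
    show Complex.exp A * (h (u + a') * Complex.exp (B * u)) = _
    rw [show Complex.exp A * (h (u + a') * Complex.exp (B * u))
        = Complex.exp (A + B * u) * h (u + a') by rw [Complex.exp_add]; ring]
    congr 2
    rw [hA, hB]; ring
  · intro a b c
    have hl : (lam : ℂ) ≠ 0 := by exact_mod_cast (Int.cast_ne_zero (α := ℂ)).mpr hlam
    unfold BWZ heisMul
    congr 1
    apply tsum_congr
    intro k
    dsimp only
    have harg : (k : ℝ) / (lam : ℝ) + a + a' = (k : ℝ) / (lam : ℝ) + (a + a') := by ring
    rw [harg]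
    have key : Complex.exp (2 * (π:ℂ) * Complex.I * ((lam:ℂ) * (c:ℂ) + (k:ℂ) * (b:ℂ))) *
        Complex.exp (2 * (π:ℂ) * Complex.I * (lam:ℂ) *
          ((c':ℂ) + (((k:ℝ)/(lam:ℝ) + a : ℝ) : ℂ) * (b':ℂ)))
        = Complex.exp (2 * (π:ℂ) * Complex.I *
            ((lam:ℂ) * ((c + c' + a*b' : ℝ):ℂ) + (k:ℂ) * ((b + b' : ℝ):ℂ))) := by
      rw [← Complex.exp_add]
      congr 1
      push_cast
      field_simp
      ring
    linear_combination (Complex.exp (-(2 * (π:ℂ) * Complex.I * (q:ℂ) * (k:ℂ)) / (lam:ℂ)) *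
      h ((k:ℝ)/(lam:ℝ) + (a + a'))) * key
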